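/- arXiv:2110.13028 — 10 statements merged into one kernel-verified Lean document; each statement's English description precedes it below -/
import Mathlib

section
/- Let φ be a continuous flow on a compact metric space X. If the set of fixed points of φ is open in X, then φ does not have periodic points with arbitrarily small periods; that is, there exists T* > 0 such that no non-fixed point x satisfies φ_T(x) = x for some 0 < T < T*. -/
/-!
If periodic points `xₙ` had periods `Tₙ → 0`, a cluster point `y` of `(xₙ)` would be fixed: reducing
`t` modulo `Tₙ` gives `φ_t xₙ = φ_{sₙ} xₙ` with `0 ≤ sₙ < Tₙ`, and both sides converge, to `φ_t y`
and to `φ_0 y = y`. Since the fixed set is an open neighbourhood of `y`, some `xₙ` would be fixed.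
-/

open Filter Topology

namespace Flow

variable {τ α : Type*} [TopologicalSpace τ] [TopologicalSpace α]

section Periods

variable [AddGroup τ] (ϕ : Flow τ α)

def periods (x : α) : AddSubgroup τ where
  carrier := {t | ϕ t x = x}
  zero_mem' := ϕ.map_zero_apply x
  add_mem' {s t} (hs : ϕ s x = x) (ht : ϕ t x = x) := show ϕ (s + t) x = x by
    rw [map_add, ht, hs]
  neg_mem' {t} (ht : ϕ t x = x) := show ϕ (-t) x = x by
    conv_lhs => rw [← ht, ← map_add, neg_add_cancel, map_zero_apply]

@[simp]
theorem mem_periods {x : α} {t : τ} : t ∈ ϕ.periods x ↔ ϕ t x = x := Iff.rfl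

end Periods

variable (ϕ : Flow ℝ α)

theorem apply_toIcoMod {x : α} {T : ℝ} (hT : 0 < T) (hTx : T ∈ ϕ.periods x) (t : ℝ) :
    ϕ (toIcoMod hT 0 t) x = ϕ t x := by
  conv_rhs => rw [← toIcoMod_add_toIcoDiv_zsmul hT 0 t, map_add,
    (ϕ.mem_periods).1 (zsmul_mem hTx _)]

theorem apply_eq_self_of_tendsto_periods [T2Space α] {ι : Type*} {l : Filter ι} [l.NeBot]
    {x : ι → α} {T : ι → ℝ} {y : α} (hxy : Tendsto x l (𝓝 y)) (hT : Tendsto T l (𝓝 0))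
    (hTpos : ∀ i, 0 < T i) (hTx : ∀ i, T i ∈ ϕ.periods (x i)) (t : ℝ) : ϕ t y = y := by
  have hs : Tendsto (fun i => toIcoMod (hTpos i) 0 t) l (𝓝 0) :=
    squeeze_zero (fun i => (toIcoMod_mem_Ico' (hTpos i) t).1)
      (fun i => (toIcoMod_mem_Ico' (hTpos i) t).2.le) hT
  have h₁ : Tendsto (fun i => ϕ t (x i)) l (𝓝 (ϕ t y)) :=
    ((ϕ.continuous_toFun t).tendsto y).comp hxy
  have h₂ : Tendsto (fun i => ϕ t (x i)) l (𝓝 y) := by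
    have := (ϕ.cont'.tendsto ((0 : ℝ), y)).comp (hs.prodMk_nhds hxy)
    simp only [Function.comp_def, Function.uncurry_apply_pair, map_zero_apply] at this
    simpa only [ϕ.apply_toIcoMod (hTpos _) (hTx _)] using this
  exact tendsto_nhds_unique h₁ h₂

theorem exists_pos_forall_apply_ne_self_of_isOpen [CompactSpace α] [T2Space α]
    (hopen : IsOpen {x | ∀ t, ϕ t x = x}) :
    ∃ T₀ > (0 : ℝ), ∀ x, (¬ ∀ t, ϕ t x = x) → ∀ T : ℝ, 0 < T → T < T₀ → ϕ T x ≠ x := by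
  by_contra! h
  choose x hx T hTpos hTlt hTx using fun n : ℕ => h (1 / (n + 1)) (by positivity)
  have hT : Tendsto T atTop (𝓝 0) :=
    squeeze_zero (fun n => (hTpos n).le) (fun n => (hTlt n).le)
      tendsto_one_div_add_atTop_nhds_zero_nat
  obtain ⟨y, -, hy⟩ := isCompact_univ.exists_mapClusterPt (f := atTop) (u := x) (by simp)
  have : (atTop ⊓ comap x (𝓝 y)).NeBot := neBot_inf_comap_iff_map.2 (inf_comm (𝓝 y) _ ▸ hy)
  have hfix : y ∈ {x | ∀ t, ϕ t x = x} :=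
    ϕ.apply_eq_self_of_tendsto_periods (tendsto_comap.mono_left inf_le_right)
      (hT.mono_left inf_le_left) hTpos hTx
  obtain ⟨n, hn⟩ := (hy.frequently (hopen.mem_nhds hfix)).exists
  obtain ⟨t, ht⟩ := hx n
  exact ht (hn t)

end Flow

theorem stmt0 {X : Type*} [MetricSpace X] [CompactSpace X]
    (φ : ℝ → X → X)
    (hcont : Continuous fun p : ℝ × X => φ p.1 p.2)
    (h0 : ∀ x, φ 0 x = x)
    (hadd : ∀ t s x, φ (t + s) x = φ t (φ s x))
    (hopen : IsOpen {x : X | ∀ t, φ t x = x}) :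
    ∃ Tstar > (0:ℝ), ∀ x : X, (¬ ∀ t, φ t x = x) →
      ∀ T : ℝ, 0 < T → T < Tstar → φ T x ≠ x :=
  Flow.exists_pos_forall_apply_ne_self_of_isOpen ⟨φ, hcont, hadd, h0⟩ hopen
end

section
/- If a continuous flow on a compact metric space has periodic orbits of arbitrarily small periods (i.e., for every ε > 0 there exists a non-fixed point x and 0 < T < ε with φ_T(x) = x), then the flow has at least one fixed point. -/
theorem stmt1 {X : Type*} [MetricSpace X] [CompactSpace X]
    (φ : ℝ → X → X)
    (hcont : Continuous fun p : ℝ × X => φ p.1 p.2)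
    (h0 : ∀ x, φ 0 x = x)
    (hadd : ∀ t s x, φ (t + s) x = φ t (φ s x))
    (hsmall : ∀ ε > (0:ℝ), ∃ x : X, ∃ T : ℝ,
      (¬ ∀ t, φ t x = x) ∧ 0 < T ∧ T < ε ∧ φ T x = x) :
    ∃ x : X, ∀ t, φ t x = x := by
  -- natural iterates of a period
  have hperN : ∀ (x : X) (T : ℝ), φ T x = x → ∀ n : ℕ, φ (n * T) x = x := by
    intro x T hT n
    induction n with
    | zero => simpa using h0 x
    | succ n ih =>
      have h1 : ((n : ℝ) + 1) * T = T + n * T := by ring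
      rw [Nat.cast_succ, h1, hadd, ih, hT]
  -- integer iterates of a period
  have hperZ : ∀ (x : X) (T : ℝ), φ T x = x → ∀ k : ℤ, φ (k * T) x = x := by
    intro x T hT k
    rcases le_or_gt 0 k with hk | hk
    · obtain ⟨n, rfl⟩ := Int.eq_ofNat_of_zero_le hk
      simpa using hperN x T hT n
    · have hk' : (0:ℤ) ≤ -k := by omega
      have h2 : ((-k).toNat : ℤ) = -k := Int.toNat_of_nonneg hk'
      have hn : ((-k).toNat : ℝ) = -(k : ℝ) := by exact_mod_cast h2
      have := hperN x T hT (-k).toNat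
      rw [hn] at this
      calc φ ((k : ℝ) * T) x = φ ((k : ℝ) * T) (φ (-(k:ℝ) * T) x) := by rw [this]
        _ = φ ((k : ℝ) * T + -(k:ℝ) * T) x := (hadd _ _ _).symm
        _ = x := by rw [show (k : ℝ) * T + -(k:ℝ) * T = 0 by ring, h0]
  -- reduce any time modulo a period
  have hred : ∀ (x : X) (T : ℝ), 0 < T → φ T x = x → ∀ t : ℝ,
      ∃ r : ℝ, 0 ≤ r ∧ r < T ∧ φ t x = φ r x := by
    intro x T hT hper t
    refine ⟨t - ⌊t / T⌋ * T, ?_, ?_, ?_⟩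
    · have := Int.sub_floor_div_mul_nonneg t hT
      linarith
    · have := Int.sub_floor_div_mul_lt t hT
      linarith
    · conv_lhs => rw [show t = (t - ⌊t / T⌋ * T) + ⌊t / T⌋ * T by ring]
      rw [hadd, hperZ x T hper]
  -- uniform smallness: small times move all points little
  have key : ∀ ε > (0:ℝ), ∃ δ > (0:ℝ), ∀ r : ℝ, |r| < δ → ∀ y : X, dist (φ r y) y < ε := by
    intro ε hε
    have hopen : IsOpen {p : ℝ × X | dist (φ p.1 p.2) p.2 < ε} := by
      apply isOpen_lt (hcont.dist continuous_snd) continuous_const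
    have hp : ({(0:ℝ)} ×ˢ (Set.univ : Set X)) ⊆ {p : ℝ × X | dist (φ p.1 p.2) p.2 < ε} := by
      rintro ⟨r, y⟩ ⟨hr, -⟩
      simp only [Set.mem_singleton_iff] at hr
      simp [Set.mem_setOf_eq, hr, h0 y, hε]
    obtain ⟨u, v, huo, hvo, h0u, huniv, huv⟩ :=
      generalized_tube_lemma isCompact_singleton isCompact_univ hopen hp
    obtain ⟨δ, hδ, hball⟩ := Metric.isOpen_iff.1 huo 0 (h0u rfl)
    refine ⟨δ, hδ, fun r hr y => ?_⟩
    have : (r, y) ∈ u ×ˢ v := ⟨hball (by simpa [Real.dist_eq] using hr), huniv (Set.mem_univ y)⟩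
    exact huv this
  -- choose periodic points with small periods
  choose xs Ts _ hTpos hTlt hTper using fun n : ℕ => hsmall (1 / (n + 1)) (by positivity)
  obtain ⟨x, g, hg, hxg⟩ := CompactSpace.tendsto_subseq xs
  refine ⟨x, fun t => ?_⟩
  apply eq_of_forall_dist_le
  intro ε hε
  obtain ⟨δ, hδ, hδε⟩ := key (ε / 3) (by linarith)
  -- continuity of φ t at x
  have hct : Continuous fun y : X => φ t y := hcont.comp (Continuous.prodMk_right t)
  obtain ⟨δ', hδ', hδ'ε⟩ := Metric.continuous_iff.1 hct x (ε / 3) (by linarith)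
  -- pick n large
  obtain ⟨n, hn⟩ := exists_nat_gt (1 / δ)
  have hconv := Metric.tendsto_atTop.1 hxg (min δ' (ε / 3)) (by positivity)
  obtain ⟨m, hm⟩ := hconv
  set N := max n m with hN
  have hxN : dist (xs (g N)) x < δ' :=
    lt_of_lt_of_le (hm N (le_max_right n m)) (min_le_left _ _)
  have hxN3 : dist (xs (g N)) x < ε / 3 :=
    lt_of_lt_of_le (hm N (le_max_right n m)) (min_le_right _ _)
  have hgN : (n : ℝ) ≤ g N := by
    have : n ≤ g N := le_trans (le_max_left n m) (Nat.le_of_lt_succ (Nat.lt_succ_of_le (hg.le_apply)))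
    exact_mod_cast this
  have hTsmall : Ts (g N) < δ := by
    have h1 : Ts (g N) < 1 / (g N + 1) := hTlt (g N)
    have h2 : (1 : ℝ) / (g N + 1) ≤ 1 / (n + 1) := by
      apply one_div_le_one_div_of_le (by positivity)
      linarith
    have h3 : (1 : ℝ) / (n + 1) < δ := by
      rw [div_lt_iff₀ (by positivity)]
      rw [div_lt_iff₀ hδ] at hn
      nlinarith
    linarith
  -- middle estimate
  obtain ⟨r, hr0, hrT, hreq⟩ := hred (xs (g N)) (Ts (g N)) (hTpos (g N)) (hTper (g N)) t
  have hmid : dist (φ t (xs (g N))) (xs (g N)) < ε / 3 := by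
    rw [hreq]
    exact hδε r (by rw [abs_of_nonneg hr0]; linarith) _
  have hleft : dist (φ t x) (φ t (xs (g N))) < ε / 3 := by
    have := hδ'ε (xs (g N)) hxN
    rwa [dist_comm] at this
  calc dist (φ t x) x ≤ dist (φ t x) (φ t (xs (g N))) + dist (φ t (xs (g N))) (xs (g N))
        + dist (xs (g N)) x := dist_triangle4 _ _ _ _
    _ ≤ ε := by linarith
end

section
/- Every fixed point of a KH-expansive flow on a compact metric space is an isolated point of the space; consequently, the set of fixed points of a KH-expansive flow is open and finite. -/
theorem stmt5 {X : Type*} [MetricSpace X] [CompactSpace X]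
    (φ : ℝ → X → X)
    (hcont : Continuous fun p : ℝ × X => φ p.1 p.2)
    (h0 : ∀ x, φ 0 x = x)
    (hadd : ∀ t s x, φ (t + s) x = φ t (φ s x))
    (hKH : ∃ δ > (0:ℝ), ∀ (x y : X) (s : ℝ → ℝ),
      Continuous s → s 0 = 0 →
      (∀ t, max (dist (φ t x) (φ (s t) x)) (dist (φ t x) (φ (s t) y)) < δ) →
      ∃ τ : ℝ, y = φ τ x) :
    (∀ x ∈ {x : X | ∀ t, φ t x = x}, IsOpen ({x} : Set X)) ∧
      IsOpen {x : X | ∀ t, φ t x = x} ∧ {x : X | ∀ t, φ t x = x}.Finite := by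
  obtain ⟨δ, hδ, hexp⟩ := hKH
  set F : Set X := {x : X | ∀ t, φ t x = x} with hF
  -- key : any point within δ of a fixed point equals it
  have key : ∀ x ∈ F, ∀ y : X, dist y x < δ → y = x := by
    intro x hx y hy
    have hc : (∀ t, max (dist (φ t x) (φ ((fun _ => (0:ℝ)) t) x))
        (dist (φ t x) (φ ((fun _ => (0:ℝ)) t) y)) < δ) := by
      intro t
      simp only [hx t, h0, dist_self]
      rw [max_lt_iff]
      exact ⟨hδ, by rwa [dist_comm]⟩
    obtain ⟨τ, hτ⟩ := hexp x y (fun _ => 0) continuous_const rfl hc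
    rw [hτ, hx τ]
  have ball_eq : ∀ x ∈ F, Metric.ball x δ = {x} := by
    intro x hx
    ext y
    simp only [Metric.mem_ball, Set.mem_singleton_iff]
    constructor
    · exact key x hx y
    · rintro rfl; simpa using hδ
  have hsingle : ∀ x ∈ F, IsOpen ({x} : Set X) := by
    intro x hx
    rw [← ball_eq x hx]
    exact Metric.isOpen_ball
  have hopen : IsOpen F := by
    rw [Metric.isOpen_iff]
    intro x hx
    refine ⟨δ, hδ, ?_⟩
    rw [ball_eq x hx]
    intro y hy
    rw [Set.mem_singleton_iff] at hy
    rw [hy]; exact hx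
  refine ⟨hsingle, hopen, ?_⟩
  -- F is closed, hence compact, and discrete
  have hclosed : IsClosed F := by
    have : F = ⋂ t : ℝ, {x : X | φ t x = x} := by
      ext x; simp [hF, Set.mem_iInter]
    rw [this]
    refine isClosed_iInter fun t => ?_
    exact isClosed_eq (hcont.comp (continuous_const.prodMk continuous_id)) continuous_id
  have hcpt : IsCompact F := hclosed.isCompact
  obtain ⟨s, hs⟩ := hcpt.elim_finite_subcover (fun x : X => Metric.ball x δ)
    (fun x => Metric.isOpen_ball)
    (fun x _ => Set.mem_iUnion.2 ⟨x, Metric.mem_ball_self hδ⟩)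
  refine Set.Finite.subset s.finite_toSet fun y hy => ?_
  obtain ⟨x, hxs, hxy⟩ := Set.mem_iUnion₂.1 (hs hy)
  have : x = y := key y hy x (by rw [dist_comm]; exact hxy)
  rwa [← this]
end

section
/- Let φ be a continuous flow on a compact metric space with open set of fixed points. Then for every T ∈ (0, T*) for some T* > 0 there exists ξ > 0 such that d(φ_T(x), x) > ξ for every point x that is not a fixed point. -/
/-!
The set `K` of non-fixed points is closed, hence compact. A point fixed by every `φ_t`,
`t ∈ [0, 1]`, is fixed for all times (its periods form a subgroup of `ℝ`), so each `x ∈ K` is moved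
by some `φ_t` with `t ∈ [0, 1]`, and by compactness of `K` it is moved by more than a uniform `ε`.
Conversely, by uniform continuity of `(t, x) ↦ φ_t x` on `[0, 1] × X`, if `φ_T` moves `x` by very
little then each step from `φ_{jT} x` to `φ_{(j+1)T} x` is shorter than `Tε/2`, so `φ_{kT} x` stays
`ε/2`-close to `x` while `kT ≤ 1`; for `T` small every `φ_t x`, `t ∈ [0, 1]`, is `ε/2`-close to such
a `φ_{kT} x`, contradicting the choice of `ε`.
-/

open Set Metric Function

theorem IsCompact.exists_pos_forall_exists_lt {X ι : Type*} [TopologicalSpace X] {K : Set X}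
    (hK : IsCompact K) {g : ι → X → ℝ} (hg : ∀ i, LowerSemicontinuous (g i))
    (hpos : ∀ x ∈ K, ∃ i, 0 < g i x) : ∃ ε > 0, ∀ x ∈ K, ∃ i, ε < g i x := by
  let W : ℕ → Set X := fun n => ⋃ i, g i ⁻¹' Ioi (1 / (n + 1))
  have hWopen : ∀ n, IsOpen (W n) := fun n => isOpen_iUnion fun i => (hg i).isOpen_preimage _
  have hWmono : Monotone W := fun m n hmn =>
    iUnion_mono fun i => preimage_mono <| Ioi_subset_Ioi <|
      one_div_le_one_div_of_le (by positivity) (by gcongr)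
  have hcover : K ⊆ ⋃ n, W n := fun x hx => by
    obtain ⟨i, hi⟩ := hpos x hx
    obtain ⟨n, hn⟩ := exists_nat_one_div_lt hi
    exact mem_iUnion.2 ⟨n, mem_iUnion.2 ⟨i, hn⟩⟩
  obtain ⟨n, hn⟩ := hK.elim_directed_cover W hWopen hcover hWmono.directed_le
  exact ⟨1 / (n + 1), by positivity, fun x hx => mem_iUnion.1 (hn hx)⟩

section Flow

variable {X : Type*} {φ : ℝ → X → X}

theorem flow_eq_of_forall_mem_Icc (h0 : ∀ x, φ 0 x = x)
    (hadd : ∀ t s x, φ (t + s) x = φ t (φ s x)) {x : X} (h : ∀ t ∈ Icc (0 : ℝ) 1, φ t x = x)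
    (t : ℝ) : φ t x = x := by
  let periods : AddSubgroup ℝ :=
    { carrier := {t | φ t x = x}
      zero_mem' := h0 x
      add_mem' := fun {s t} (hs : φ s x = x) (ht : φ t x = x) => by
        change φ (s + t) x = x
        rw [hadd, ht, hs]
      neg_mem' := fun {t} (ht : φ t x = x) => by
        change φ (-t) x = x
        calc φ (-t) x = φ (-t) (φ t x) := by rw [ht]
          _ = x := by rw [← hadd, neg_add_cancel, h0] }
  have h1 : (1 : ℝ) ∈ periods := h 1 ⟨zero_le_one, le_rfl⟩
  have := periods.add_mem (periods.zsmul_mem h1 ⌊t⌋)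
    (h (Int.fract t) ⟨Int.fract_nonneg t, (Int.fract_lt_one t).le⟩)
  rwa [zsmul_one, Int.floor_add_fract] at this

theorem flow_iterate (h0 : ∀ x, φ 0 x = x) (hadd : ∀ t s x, φ (t + s) x = φ t (φ s x))
    (T : ℝ) (n : ℕ) (x : X) : (φ T)^[n] x = φ (n * T) x := by
  induction n with
  | zero => simp [h0]
  | succ n ih => rw [iterate_succ_apply', ih, ← hadd]; push_cast; ring_nf

end Flow

theorem dist_iterate_self_le {X : Type*} [PseudoMetricSpace X] {f : X → X} {x : X} {η : ℝ}
    {n : ℕ} (h : ∀ k < n, dist (f^[k] (f x)) (f^[k] x) ≤ η) : dist (f^[n] x) x ≤ n * η :=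
  calc dist (f^[n] x) x = dist (f^[0] x) (f^[n] x) := dist_comm _ _
    _ ≤ ∑ k ∈ Finset.range n, dist (f^[k] x) (f^[k + 1] x) := dist_le_range_sum_dist (fun k => f^[k] x) n
    _ ≤ ∑ _k ∈ Finset.range n, η := Finset.sum_le_sum fun k hk => by
      rw [iterate_succ_apply, dist_comm]
      exact h k (Finset.mem_range.1 hk)
    _ = n * η := by simp

section CompactFlow

variable {X : Type*} [PseudoMetricSpace X] [CompactSpace X] {φ : ℝ → X → X}

theorem exists_forall_dist_flow_lt (hcont : Continuous fun p : ℝ × X => φ p.1 p.2)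
    {S : Set ℝ} (hS : IsCompact S) {ε : ℝ} (hε : 0 < ε) :
    ∃ δ > 0, ∀ s ∈ S, ∀ t ∈ S, ∀ x y : X, dist s t < δ → dist x y < δ →
      dist (φ s x) (φ t y) < ε := by
  obtain ⟨δ, hδ, h⟩ := Metric.uniformContinuousOn_iff.1
    ((hS.prod isCompact_univ).uniformContinuousOn_of_continuous hcont.continuousOn) ε hε
  exact ⟨δ, hδ, fun s hs t ht x y hst hxy =>
    h (s, x) ⟨hs, trivial⟩ (t, y) ⟨ht, trivial⟩ (by rw [Prod.dist_eq]; exact max_lt hst hxy)⟩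

theorem exists_forall_dist_flow_lt_of_dist_le (hcont : Continuous fun p : ℝ × X => φ p.1 p.2)
    (h0 : ∀ x, φ 0 x = x) (hadd : ∀ t s x, φ (t + s) x = φ t (φ s x)) {ε : ℝ} (hε : 0 < ε) :
    ∃ Tstar > (0 : ℝ), ∀ T : ℝ, 0 < T → T < Tstar → ∃ ξ > (0 : ℝ),
      ∀ x : X, dist (φ T x) x ≤ ξ → ∀ t ∈ Icc (0 : ℝ) 1, dist (φ t x) x < ε := by
  obtain ⟨δ, hδ, hshift⟩ := exists_forall_dist_flow_lt hcont isCompact_Icc (half_pos hε)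
  refine ⟨δ, hδ, fun T hT hTδ => ?_⟩
  obtain ⟨δ', hδ', hstep⟩ :=
    exists_forall_dist_flow_lt hcont isCompact_Icc (by positivity : 0 < T * (ε / 2))
  refine ⟨δ' / 2, half_pos hδ', fun x hx t ht => ?_⟩
  set k := ⌊t / T⌋₊
  have hkt : k * T ≤ t := (le_div_iff₀ hT).1 (Nat.floor_le (div_nonneg ht.1 hT.le))
  have htk : t < k * T + T := by
    have := Nat.lt_floor_add_one (t / T)
    rw [div_lt_iff₀ hT] at this
    linarith
  have hdrift : dist (φ (k * T) x) x ≤ k * (T * (ε / 2)) := by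
    rw [← flow_iterate h0 hadd]
    refine dist_iterate_self_le fun j hj => ?_
    have hjT : j * T ∈ Icc (0 : ℝ) 1 :=
      ⟨by positivity, by nlinarith [(Nat.cast_lt (α := ℝ)).2 hj, ht.2]⟩
    rw [flow_iterate h0 hadd, flow_iterate h0 hadd]
    exact (hstep _ hjT _ hjT _ _ (by simpa using hδ') (hx.trans_lt (half_lt_self hδ'))).le
  have hclose : dist (φ t x) (φ (k * T) x) < ε / 2 :=
    hshift t ht (k * T) ⟨by positivity, hkt.trans ht.2⟩ x x
      (by rw [Real.dist_eq, abs_of_nonneg (by linarith)]; linarith) (by simpa using hδ)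
  calc dist (φ t x) x ≤ dist (φ t x) (φ (k * T) x) + dist (φ (k * T) x) x := dist_triangle _ _ _
    _ < ε / 2 + ε / 2 := by nlinarith [ht.2]
    _ = ε := add_halves ε

end CompactFlow

theorem stmt7 {X : Type*} [MetricSpace X] [CompactSpace X]
    (φ : ℝ → X → X)
    (hcont : Continuous fun p : ℝ × X => φ p.1 p.2)
    (h0 : ∀ x, φ 0 x = x)
    (hadd : ∀ t s x, φ (t + s) x = φ t (φ s x))
    (hopen : IsOpen {x : X | ∀ t, φ t x = x}) :
    ∃ Tstar > (0:ℝ), ∀ T : ℝ, 0 < T → T < Tstar → ∃ ξ > (0:ℝ),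
      ∀ x : X, (¬ ∀ t, φ t x = x) → ξ < dist (φ T x) x := by
  have hmoved : ∀ x ∈ {x : X | ∀ t, φ t x = x}ᶜ, ∃ t : Icc (0 : ℝ) 1, 0 < dist (φ t x) x :=
    fun x hx => by
      by_contra! h
      exact hx (flow_eq_of_forall_mem_Icc h0 hadd fun t ht => dist_le_zero.1 (h ⟨t, ht⟩))
  have hdisp : ∀ t : Icc (0 : ℝ) 1, LowerSemicontinuous fun x => dist (φ t x) x := fun t =>
    ((hcont.comp (continuous_const.prodMk continuous_id)).dist continuous_id).lowerSemicontinuous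
  obtain ⟨ε, hε, hmove⟩ :=
    hopen.isClosed_compl.isCompact.exists_pos_forall_exists_lt hdisp hmoved
  obtain ⟨Tstar, hTstar, hsmall⟩ := exists_forall_dist_flow_lt_of_dist_le hcont h0 hadd hε
  refine ⟨Tstar, hTstar, fun T hT hTstarT => ?_⟩
  obtain ⟨ξ, hξ, hstay⟩ := hsmall T hT hTstarT
  refine ⟨ξ, hξ, fun x hx => ?_⟩
  obtain ⟨t, ht⟩ := hmove x hx
  by_contra! hξx
  exact (hstay x hξx t t.2).not_gt ht
end

section
/- Let φ be a continuous flow on a compact metric space such that there exists T* > 0 so that for all T ∈ (0, T*) there is ξ > 0 with d(φ_T(x), x) > ξ for all x ∉ fix(φ). Then fix(φ) is open. -/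
theorem stmt8 {X : Type*} [MetricSpace X] [CompactSpace X]
    (φ : ℝ → X → X)
    (hcont : Continuous fun p : ℝ × X => φ p.1 p.2)
    (h0 : ∀ x, φ 0 x = x)
    (hadd : ∀ t s x, φ (t + s) x = φ t (φ s x))
    (h : ∃ Tstar > (0:ℝ), ∀ T : ℝ, 0 < T → T < Tstar → ∃ ξ > (0:ℝ),
      ∀ x : X, (¬ ∀ t, φ t x = x) → ξ < dist (φ T x) x) :
    IsOpen {x : X | ∀ t, φ t x = x} := by
  obtain ⟨Tstar, hT, hmain⟩ := h
  obtain ⟨ξ, hξ, hfix⟩ := hmain (Tstar/2) (by linarith) (by linarith)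
  rw [isOpen_iff_mem_nhds]
  intro x hx0
  have hc : Continuous fun y : X => dist (φ (Tstar/2) y) y :=
    (hcont.comp (continuous_const.prodMk continuous_id)).dist continuous_id
  have hlt : ∀ᶠ y in nhds x, dist (φ (Tstar/2) y) y < ξ := by
    have h0' : dist (φ (Tstar/2) x) x = 0 := by rw [hx0 _, dist_self]
    exact hc.continuousAt.eventually_lt continuousAt_const (by simpa [h0'] using hξ)
  filter_upwards [hlt] with y hy
  by_contra hne
  exact absurd (hfix y hne) (not_lt.2 hy.le)
end

section
/- Let φ be a continuous flow on a compact metric space X with open set of fixed points. For each ε > 0 there exists δ > 0 such that if x ∈ X is not a fixed point and s : ℝ → ℝ is continuous with s(0) = 0 and d(φ_t(x), φ_{s(t)}(x)) < δ for all t ∈ ℝ, then |s(t) − t| < ε for all t ∈ ℝ. -/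
/-!
On the compact set of non-fixed points the periods of periodic orbits are bounded below by some
`p > 0`: a limit of points with periods tending to `0` is fixed. Hence for `0 < τ ≤ p` the
displacement `dist y (φ τ y)` is bounded below by some `δ > 0` on that set. If `|s t - t| ≥ ε`
somewhere, then, taking `τ < min ε p`, the intermediate value theorem gives `t₀` with
`|s t₀ - t₀| = τ`; the points `φ t₀ x` and `φ (s t₀) x` are then `y` and `φ τ y` for a point `y`
of the orbit of `x`, so they are at distance at least `δ`.
-/

open Filter Topology Set

namespace Flow

variable {X : Type*}

section Topological

variable [TopologicalSpace X] (ϕ : Flow ℝ X)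

def fixedPoints : Set X := {x | ∀ t, ϕ t x = x}

theorem apply_mem_fixedPoints_iff (t : ℝ) (x : X) :
    ϕ t x ∈ ϕ.fixedPoints ↔ x ∈ ϕ.fixedPoints := by
  refine ⟨fun h => ?_, fun h => by rwa [h t]⟩
  have hx : ϕ t x = x := by
    simpa only [← map_add, neg_add_cancel, map_zero_apply, eq_comm] using h (-t)
  rwa [hx] at h

theorem periodic_of_apply_eq {x : X} {r : ℝ} (h : ϕ r x = x) :
    Function.Periodic (fun t => ϕ t x) r :=
  fun t => by simp only [map_add, h]

theorem mem_fixedPoints_of_tendsto [T2Space X] {ι : Type*} {l : Filter ι} [l.NeBot]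
    {x : ι → X} {r : ι → ℝ} {a : X} (hx : Tendsto x l (𝓝 a)) (hr : Tendsto r l (𝓝 0))
    (hr_pos : ∀ i, 0 < r i) (hper : ∀ i, ϕ (r i) (x i) = x i) : a ∈ ϕ.fixedPoints := by
  intro t
  choose u hu hut using fun i => (ϕ.periodic_of_apply_eq (hper i)).exists_mem_Ico₀ (hr_pos i) t
  have hu0 : Tendsto u l (𝓝 0) :=
    tendsto_of_tendsto_of_tendsto_of_le_of_le tendsto_const_nhds hr
      (fun i => (hu i).1) (fun i => (hu i).2.le)
  have hlim_t : Tendsto (fun i => ϕ t (x i)) l (𝓝 (ϕ t a)) :=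
    ((ϕ.continuous_toFun t).tendsto a).comp hx
  have hlim_u : Tendsto (fun i => ϕ (u i) (x i)) l (𝓝 a) := by
    simpa only [Function.comp_def, Function.uncurry_apply_pair, map_zero_apply] using
      (ϕ.cont'.tendsto (0, a)).comp (hu0.prodMk_nhds hx)
  exact tendsto_nhds_unique (hlim_t.congr hut) hlim_u

theorem exists_pos_forall_apply_ne_of_isCompact [T2Space X] {K : Set X} (hK : IsCompact K)
    (hK_fix : ∀ x ∈ K, x ∉ ϕ.fixedPoints) : ∃ p > 0, ∀ x ∈ K, ∀ r ∈ Ioc 0 p, ϕ r x ≠ x := by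
  by_contra! h
  choose x hxK r hr hper using fun n : ℕ => h (1 / (n + 1)) Nat.one_div_pos_of_nat
  let U := Ultrafilter.of (atTop : Filter ℕ)
  obtain ⟨a, haK, hxa⟩ := hK.ultrafilter_le_nhds (U.map x) (tendsto_principal.2 (.of_forall hxK))
  have hr0 : Tendsto r atTop (𝓝 0) :=
    tendsto_of_tendsto_of_tendsto_of_le_of_le tendsto_const_nhds
      tendsto_one_div_add_atTop_nhds_zero_nat (fun n => (hr n).1.le) (fun n => (hr n).2)
  exact hK_fix a haK <| ϕ.mem_fixedPoints_of_tendsto hxa (hr0.mono_left (Ultrafilter.of_le _))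
    (fun n => (hr n).1) hper

end Topological

theorem exists_dist_apply_eq_of_abs_sub_eq [PseudoMetricSpace X] (ϕ : Flow ℝ X) (x : X)
    {a b τ : ℝ} (h : |a - b| = τ) :
    ∃ u, dist (ϕ b x) (ϕ a x) = dist (ϕ u x) (ϕ τ (ϕ u x)) := by
  rcases (abs_eq ((abs_nonneg _).trans_eq h)).1 h with h | h
  · exact ⟨b, by rw [← map_add, show τ + b = a by linarith]⟩
  · exact ⟨a, by rw [dist_comm, ← map_add, show τ + a = b by linarith]⟩

end Flow

theorem exists_abs_sub_eq_of_le_abs_sub {s : ℝ → ℝ} (hs : Continuous s) (hs0 : s 0 = 0)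
    {τ t : ℝ} (hτ : 0 ≤ τ) (ht : τ ≤ |s t - t|) : ∃ t₀, |s t₀ - t₀| = τ :=
  intermediate_value_univ 0 t (hs.sub continuous_id).abs ⟨by simpa [hs0] using hτ, ht⟩

theorem stmt9 {X : Type*} [MetricSpace X] [CompactSpace X]
    (φ : ℝ → X → X)
    (hcont : Continuous fun p : ℝ × X => φ p.1 p.2)
    (h0 : ∀ x, φ 0 x = x)
    (hadd : ∀ t s x, φ (t + s) x = φ t (φ s x))
    (hopen : IsOpen {x : X | ∀ t, φ t x = x}) :
    ∀ ε > (0:ℝ), ∃ δ > (0:ℝ), ∀ (x : X) (s : ℝ → ℝ),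
      (¬ ∀ t, φ t x = x) → Continuous s → s 0 = 0 →
      (∀ t, dist (φ t x) (φ (s t) x) < δ) →
      ∀ t : ℝ, |s t - t| < ε := by
  intro ε hε
  let ϕ : Flow ℝ X := ⟨φ, hcont, hadd, h0⟩
  have hK : IsCompact ϕ.fixedPointsᶜ := hopen.isClosed_compl.isCompact
  obtain ⟨p, hp, hper⟩ := ϕ.exists_pos_forall_apply_ne_of_isCompact hK fun _ hx => hx
  obtain ⟨τ, hτ, hτε, hτp⟩ : ∃ τ, 0 < τ ∧ τ < ε ∧ τ ≤ p :=
    ⟨min ε p / 2, by positivity, by linarith [min_le_left ε p, lt_min hε hp],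
      by linarith [min_le_right ε p, lt_min hε hp]⟩
  obtain ⟨δ, hδ, hδ_le⟩ :=
    hK.exists_forall_le' (continuous_id.dist (ϕ.continuous_toFun τ)).continuousOn
      fun y hy => dist_pos.2 (hper y hy τ ⟨hτ, hτp⟩).symm
  refine ⟨δ, hδ, fun x s hx hs hs0 hd t => ?_⟩
  by_contra! hst
  obtain ⟨t₀, ht₀⟩ := exists_abs_sub_eq_of_le_abs_sub hs hs0 hτ.le (hτε.le.trans hst)
  obtain ⟨u, hu⟩ := ϕ.exists_dist_apply_eq_of_abs_sub_eq x ht₀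
  exact (hd t₀).not_ge <| hu ▸ hδ_le _ ((ϕ.apply_mem_fixedPoints_iff u x).not.2 hx)
end

section
/- A continuous flow φ on a compact metric space is kinematic expansive if and only if for all ε > 0 there exists δ > 0 such that whenever x, y ∈ X and s : ℝ → ℝ is a continuous surjection with s(0) = 0 satisfying max{d(φ_t(x), φ_{s(t)}(x)), d(φ_t(x), φ_{s(t)}(y))} < δ for all t ∈ ℝ, then y = φ_τ(x) for some τ ∈ (−ε, ε). -/
/-!
Reparametrized shadowing and plain shadowing are interchangeable up to a factor 2: writing each
time `u` as `s t`, the triangle inequality through `φ t x` bounds `d(φ u x, φ u y)` by twice the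
reparametrized bound, and conversely `s = id` recovers the plain condition.
-/

open Function

section Reparametrization

variable {α X : Type*} [PseudoMetricSpace X] {φ : α → X → X} {x y : X} {δ : ℝ}

theorem dist_lt_two_mul_of_surjective_reparam {s : α → α} (hs : Surjective s)
    (h : ∀ t, max (dist (φ t x) (φ (s t) x)) (dist (φ t x) (φ (s t) y)) < δ) (u : α) :
    dist (φ u x) (φ u y) < 2 * δ := by
  obtain ⟨t, rfl⟩ := hs u
  have hx := (le_max_left _ _).trans_lt (h t)
  have hy := (le_max_right _ _).trans_lt (h t)
  calc dist (φ (s t) x) (φ (s t) y) ≤ dist (φ t x) (φ (s t) x) + dist (φ t x) (φ (s t) y) :=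
        dist_triangle_left _ _ _
    _ < 2 * δ := by linarith

theorem max_dist_id_reparam (t : α) :
    max (dist (φ t x) (φ (id t) x)) (dist (φ t x) (φ (id t) y)) = dist (φ t x) (φ t y) := by
  simp

end Reparametrization

theorem stmt12_general {X : Type*} [MetricSpace X]
    (φ : ℝ → X → X) :
    (∀ ε > (0:ℝ), ∃ δ > (0:ℝ), ∀ x y : X,
        (∀ t, dist (φ t x) (φ t y) < δ) → ∃ τ : ℝ, |τ| < ε ∧ y = φ τ x) ↔
      (∀ ε > (0:ℝ), ∃ δ > (0:ℝ), ∀ (x y : X) (s : ℝ → ℝ),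
        Continuous s → Function.Surjective s → s 0 = 0 →
        (∀ t, max (dist (φ t x) (φ (s t) x)) (dist (φ t x) (φ (s t) y)) < δ) →
        ∃ τ : ℝ, |τ| < ε ∧ y = φ τ x) := by
  constructor
  · intro h ε hε
    obtain ⟨δ, hδ, H⟩ := h ε hε
    refine ⟨δ / 2, half_pos hδ, fun x y s _ hsurj _ hmax => H x y fun u => ?_⟩
    simpa [mul_div_cancel₀] using dist_lt_two_mul_of_surjective_reparam hsurj hmax u
  · intro h ε hε
    obtain ⟨δ, hδ, H⟩ := h ε hε
    exact ⟨δ, hδ, fun x y hd =>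
      H x y id continuous_id surjective_id rfl fun t => (max_dist_id_reparam t).trans_lt (hd t)⟩

theorem stmt12 {X : Type*} [MetricSpace X] [CompactSpace X]
    (φ : ℝ → X → X)
    (hcont : Continuous fun p : ℝ × X => φ p.1 p.2)
    (h0 : ∀ x, φ 0 x = x)
    (hadd : ∀ t s x, φ (t + s) x = φ t (φ s x)) :
    (∀ ε > (0:ℝ), ∃ δ > (0:ℝ), ∀ x y : X,
        (∀ t, dist (φ t x) (φ t y) < δ) → ∃ τ : ℝ, |τ| < ε ∧ y = φ τ x) ↔
      (∀ ε > (0:ℝ), ∃ δ > (0:ℝ), ∀ (x y : X) (s : ℝ → ℝ),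
        Continuous s → Function.Surjective s → s 0 = 0 →
        (∀ t, max (dist (φ t x) (φ (s t) x)) (dist (φ t x) (φ (s t) y)) < δ) →
        ∃ τ : ℝ, |τ| < ε ∧ y = φ τ x) :=
  stmt12_general φ
end

section
/- A continuous flow φ on a compact metric space is separating if and only if there exists δ > 0 such that whenever x, y ∈ X and s : ℝ → ℝ is a continuous surjection with s(0) = 0 satisfying max{d(φ_t(x), φ_{s(t)}(x)), d(φ_t(x), φ_{s(t)}(y))} < δ for all t ∈ ℝ, then y = φ_τ(x) for some τ ∈ ℝ. -/
theorem stmt14 {X : Type*} [MetricSpace X] [CompactSpace X]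
    (φ : ℝ → X → X)
    (hcont : Continuous fun p : ℝ × X => φ p.1 p.2)
    (h0 : ∀ x, φ 0 x = x)
    (hadd : ∀ t s x, φ (t + s) x = φ t (φ s x)) :
    (∃ δ > (0:ℝ), ∀ x y : X,
        (∀ t, dist (φ t x) (φ t y) < δ) → ∃ τ : ℝ, y = φ τ x) ↔
      (∃ δ > (0:ℝ), ∀ (x y : X) (s : ℝ → ℝ),
        Continuous s → Function.Surjective s → s 0 = 0 →
        (∀ t, max (dist (φ t x) (φ (s t) x)) (dist (φ t x) (φ (s t) y)) < δ) →
        ∃ τ : ℝ, y = φ τ x) := by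
  constructor
  · rintro ⟨δ, hδ, hsep⟩
    refine ⟨δ / 2, by linarith, fun x y s _ hsurj _ hmax => ?_⟩
    apply hsep x y
    intro u
    obtain ⟨t, ht⟩ := hsurj u
    have h := hmax t
    have h1 : dist (φ t x) (φ (s t) x) < δ / 2 := lt_of_le_of_lt (le_max_left _ _) h
    have h2 : dist (φ t x) (φ (s t) y) < δ / 2 := lt_of_le_of_lt (le_max_right _ _) h
    calc dist (φ u x) (φ u y) = dist (φ (s t) x) (φ (s t) y) := by rw [ht]
      _ ≤ dist (φ (s t) x) (φ t x) + dist (φ t x) (φ (s t) y) := dist_triangle _ _ _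
      _ < δ / 2 + δ / 2 := by rw [dist_comm]; linarith
      _ = δ := by ring
  · rintro ⟨δ, hδ, hsep⟩
    refine ⟨δ, hδ, fun x y hxy => ?_⟩
    apply hsep x y id continuous_id Function.surjective_id rfl
    intro t
    simp only [id]
    rw [max_lt_iff]
    constructor
    · simpa using hδ
    · exact hxy t
end

section
/- If φ is KH-kinematic expansive then φ is KH-expansive and kinematic expansive; conversely, if φ is KH-expansive and kinematic expansive then φ is KH-kinematic expansive. -/
/-!
Taking `s = id`, or forgetting the bound on `τ`, shows that KH-kinematic expansivity implies the
other two notions. Conversely, KH-expansivity with constant `s` isolates fixed points uniformly,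
so every non-fixed orbit stays in the compact set `K` of points `δ`-far from all fixed points.
Periods of points of `K` are bounded below, hence for a small `η` the displacement
`dist (ϕ η z) z` is at least some `ρ > 0` on `K`, and by the intermediate value theorem a
reparametrization `s` keeping the orbit of `x` `ρ`-close to itself never drifts by `η` from the
identity. By uniform continuity of `ϕ` in small times, the orbits of `x` and `y` are then close
at equal times, and kinematic expansivity applies.
-/

open Set

namespace Flow

section Periods

variable {X : Type*} [TopologicalSpace X] (ϕ : Flow ℝ X)

theorem map_zsmul_eq_self {u : ℝ} {z : X} (hu : ϕ u z = z) (m : ℤ) : ϕ (m • u) z = z :=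
  letI := ϕ.toAddAction
  (AddAction.stabilizer ℝ z).zsmul_mem hu m

theorem exists_mem_Ico_map_eq {u : ℝ} {z : X} (hu0 : 0 < u) (hu : ϕ u z = z) (t : ℝ) :
    ∃ r ∈ Ico 0 u, ϕ t z = ϕ r z := by
  refine ⟨toIcoMod hu0 0 t, toIcoMod_mem_Ico' hu0 t, ?_⟩
  conv_lhs => rw [← toIcoMod_add_toIcoDiv_zsmul hu0 0 t]
  rw [map_add, ϕ.map_zsmul_eq_self hu]

end Periods

section Compact

variable {X : Type*} [MetricSpace X] (ϕ : Flow ℝ X)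

theorem exists_pos_forall_dist_map_self_lt [CompactSpace X] {θ : ℝ} (hθ : 0 < θ) :
    ∃ η > 0, ∀ t, |t| < η → ∀ z, dist (ϕ t z) z < θ := by
  have hunif := (Metric.tendstoUniformly_iff.mp (ϕ.cont'.tendstoUniformly ϕ 0)) θ hθ
  obtain ⟨η, hη, hball⟩ := Metric.eventually_nhds_iff.mp hunif
  refine ⟨η, hη, fun t ht z => ?_⟩
  have := hball (show dist t 0 < η by rwa [Real.dist_0_eq_abs]) z
  rwa [map_zero_apply, dist_comm] at this

theorem exists_pos_dist_map_self_lt_of_period_lt [CompactSpace X] {θ : ℝ} (hθ : 0 < θ) :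
    ∃ η > 0, ∀ z u, u ∈ Ioo 0 η → ϕ u z = z → ∀ t, dist (ϕ t z) z < θ := by
  obtain ⟨η, hη, hsmall⟩ := ϕ.exists_pos_forall_dist_map_self_lt hθ
  refine ⟨η, hη, fun z u hu hper t => ?_⟩
  obtain ⟨r, hr, hrt⟩ := ϕ.exists_mem_Ico_map_eq hu.1 hper t
  rw [hrt]
  exact hsmall r (by rw [abs_of_nonneg hr.1]; exact hr.2.trans hu.2) z

theorem exists_pos_forall_lt_dist_map_self {K : Set X} (hK : IsCompact K)
    (hmove : ∀ z ∈ K, ∃ t, ϕ t z ≠ z) :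
    ∃ θ > 0, ∀ z ∈ K, ∃ t, θ < dist (ϕ t z) z := by
  let U : ℕ → Set X := fun n => ⋃ t, {z | 1 / ((n : ℝ) + 1) < dist (ϕ t z) z}
  have hUo : ∀ n, IsOpen (U n) := fun n => isOpen_iUnion fun t =>
    isOpen_lt continuous_const ((ϕ.continuous_toFun t).dist continuous_id)
  have hKU : K ⊆ ⋃ n, U n := fun z hz => by
    obtain ⟨t, ht⟩ := hmove z hz
    obtain ⟨n, hn⟩ := exists_nat_one_div_lt (dist_pos.mpr ht)
    exact mem_iUnion.mpr ⟨n, mem_iUnion.mpr ⟨t, hn⟩⟩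
  have hUmono : Monotone U := fun m n hmn => iUnion_mono fun _ =>
    ofPred_subset_ofPred.mpr fun _ hz => (Nat.one_div_le_one_div hmn).trans_lt hz
  obtain ⟨n, hn⟩ := hK.elim_directed_cover U hUo hKU hUmono.directed_le
  exact ⟨1 / ((n : ℝ) + 1), by positivity, fun z hz => mem_iUnion.mp (hn hz)⟩

theorem exists_pos_forall_map_ne_self [CompactSpace X] {K : Set X} (hK : IsCompact K)
    (hmove : ∀ z ∈ K, ∃ t, ϕ t z ≠ z) :
    ∃ P > 0, ∀ z ∈ K, ∀ u ∈ Ioo 0 P, ϕ u z ≠ z := by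
  obtain ⟨θ, hθ, hfar⟩ := ϕ.exists_pos_forall_lt_dist_map_self hK hmove
  obtain ⟨P, hP, hnear⟩ := ϕ.exists_pos_dist_map_self_lt_of_period_lt hθ
  refine ⟨P, hP, fun z hz u hu hper => ?_⟩
  obtain ⟨t, ht⟩ := hfar z hz
  exact (hnear z u hu hper t).not_gt ht

theorem exists_pos_le_dist_map_self {K : Set X} (hK : IsCompact K) {η : ℝ}
    (hη : ∀ z ∈ K, ϕ η z ≠ z) : ∃ ρ > 0, ∀ z ∈ K, ρ ≤ dist (ϕ η z) z :=
  hK.exists_forall_le' ((ϕ.continuous_toFun η).dist continuous_id).continuousOn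
    fun z hz => dist_pos.mpr (hη z hz)

theorem abs_sub_lt_of_forall_dist_lt {K : Set X} {η ρ : ℝ} (hη : 0 < η)
    (hsep : ∀ z ∈ K, ρ ≤ dist (ϕ η z) z) {x : X} (horb : ∀ t, ϕ t x ∈ K) {s : ℝ → ℝ}
    (hs : Continuous s) (hs0 : s 0 = 0) (hclose : ∀ t, dist (ϕ t x) (ϕ (s t) x) < ρ) (t : ℝ) :
    |s t - t| < η := by
  by_contra! hfar
  have hmem : η ∈ uIcc |s 0 - 0| |s t - t| := by
    rw [hs0, sub_zero, abs_zero]; exact mem_uIcc.mpr (Or.inl ⟨hη.le, hfar⟩)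
  have hdrift : Continuous fun c => |s c - c| := by fun_prop
  obtain ⟨c, -, hc⟩ := intermediate_value_uIcc hdrift.continuousOn hmem
  have hsep_c : ρ ≤ dist (ϕ c x) (ϕ (s c) x) := by
    rcases (abs_eq hη.le).mp hc with h | h
    · have hsc : ϕ (s c) x = ϕ η (ϕ c x) := by rw [← map_add]; congr 1; linarith
      rw [dist_comm, hsc]; exact hsep _ (horb c)
    · have hc' : ϕ c x = ϕ η (ϕ (s c) x) := by rw [← map_add]; congr 1; linarith
      rw [hc']; exact hsep _ (horb (s c))
  exact (hclose c).not_ge hsep_c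

end Compact

section Expansive

variable {X : Type*} [MetricSpace X] (ϕ : Flow ℝ X)

def IsKHExpansive : Prop :=
  ∃ δ > 0, ∀ (x y : X) (s : ℝ → ℝ), Continuous s → s 0 = 0 →
    (∀ t, max (dist (ϕ t x) (ϕ (s t) x)) (dist (ϕ t x) (ϕ (s t) y)) < δ) → ∃ τ, y = ϕ τ x

def IsKinematicExpansive : Prop :=
  ∀ ε > 0, ∃ δ > 0, ∀ x y : X, (∀ t, dist (ϕ t x) (ϕ t y) < δ) → ∃ τ, |τ| < ε ∧ y = ϕ τ x

def IsKHKinematicExpansive : Prop :=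
  ∀ ε > 0, ∃ δ > 0, ∀ (x y : X) (s : ℝ → ℝ), Continuous s → s 0 = 0 →
    (∀ t, max (dist (ϕ t x) (ϕ (s t) x)) (dist (ϕ t x) (ϕ (s t) y)) < δ) →
    ∃ τ, |τ| < ε ∧ y = ϕ τ x

variable {ϕ}

theorem IsKHKinematicExpansive.isKHExpansive (h : ϕ.IsKHKinematicExpansive) :
    ϕ.IsKHExpansive := by
  obtain ⟨δ, hδ, H⟩ := h 1 one_pos
  exact ⟨δ, hδ, fun x y s hs hs0 hclose => (H x y s hs hs0 hclose).imp fun _ => And.right⟩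

theorem IsKHKinematicExpansive.isKinematicExpansive (h : ϕ.IsKHKinematicExpansive) :
    ϕ.IsKinematicExpansive := fun ε hε => by
  obtain ⟨δ, hδ, H⟩ := h ε hε
  refine ⟨δ, hδ, fun x y hxy => H x y id continuous_id rfl fun t => ?_⟩
  simpa only [id_eq, dist_self, max_lt_iff, hδ, true_and] using hxy t

theorem IsKHExpansive.exists_pos_eq_of_dist_fixed_lt (h : ϕ.IsKHExpansive) :
    ∃ δ > 0, ∀ p w, (∀ t, ϕ t p = p) → dist p w < δ → w = p := by
  obtain ⟨δ, hδ, H⟩ := h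
  refine ⟨δ, hδ, fun p w hp hw => ?_⟩
  obtain ⟨τ, rfl⟩ := H p w (fun _ => 0) continuous_const rfl fun t => by
    simpa only [hp, map_zero_apply, dist_self, max_lt_iff, hδ, true_and] using hw
  exact hp τ

theorem le_dist_map_of_not_fixed {δ : ℝ}
    (hiso : ∀ p w, (∀ t, ϕ t p = p) → dist p w < δ → w = p) {x : X} (hx : ¬∀ t, ϕ t x = x)
    (t : ℝ) {p : X} (hp : ∀ t, ϕ t p = p) : δ ≤ dist (ϕ t x) p := by
  by_contra! hnear
  have hxp : x = p := by
    rw [← ϕ.map_zero_apply x, ← neg_add_cancel t, map_add, hiso p (ϕ t x) hp (by rwa [dist_comm]), hp]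
  exact hx fun u => by rw [hxp, hp]

theorem exists_pos_forall_abs_sub_lt [CompactSpace X] {δ : ℝ} (hδ : 0 < δ)
    (hiso : ∀ p w, (∀ t, ϕ t p = p) → dist p w < δ → w = p) {η : ℝ} (hη : 0 < η) :
    ∃ ρ > 0, ∀ (x : X) (s : ℝ → ℝ), Continuous s → s 0 = 0 →
      (∀ t, dist (ϕ t x) (ϕ (s t) x) < ρ) → (∀ t, ϕ t x = x) ∨ ∀ t, |s t - t| < η := by
  let K : Set X := {z | ∀ p, (∀ t, ϕ t p = p) → δ ≤ dist z p}
  have hK : IsCompact K := IsClosed.isCompact <| by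
    simp only [K, ofPred_forall]
    exact isClosed_iInter fun p => isClosed_iInter fun _ =>
      isClosed_le continuous_const (continuous_id.dist continuous_const)
  have hmove : ∀ z ∈ K, ∃ t, ϕ t z ≠ z := fun z hz => by
    by_contra! hfix
    have := hz z hfix
    rw [dist_self] at this
    linarith
  obtain ⟨P, hP, hper⟩ := ϕ.exists_pos_forall_map_ne_self hK hmove
  have hη₀ : 0 < min η (P / 2) := by positivity
  obtain ⟨ρ, hρ, hsep⟩ := ϕ.exists_pos_le_dist_map_self hK fun z hz =>
    hper z hz _ ⟨hη₀, (min_le_right _ _).trans_lt (half_lt_self hP)⟩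
  refine ⟨ρ, hρ, fun x s hs hs0 hclose => or_iff_not_imp_left.mpr fun hx t => ?_⟩
  have horb : ∀ t, ϕ t x ∈ K := fun t p hp => le_dist_map_of_not_fixed hiso hx t hp
  exact (ϕ.abs_sub_lt_of_forall_dist_lt hη₀ hsep horb hs hs0 hclose t).trans_le (min_le_left _ _)

theorem IsKHExpansive.isKHKinematicExpansive [CompactSpace X] (hKH : ϕ.IsKHExpansive)
    (hkin : ϕ.IsKinematicExpansive) : ϕ.IsKHKinematicExpansive := by
  intro ε hε
  obtain ⟨δ₁, hδ₁, hiso⟩ := hKH.exists_pos_eq_of_dist_fixed_lt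
  obtain ⟨δ₂, hδ₂, hδ₂kin⟩ := hkin ε hε
  obtain ⟨η, hη, hsmall⟩ := ϕ.exists_pos_forall_dist_map_self_lt (half_pos hδ₂)
  obtain ⟨ρ, hρ, hsync⟩ := ϕ.exists_pos_forall_abs_sub_lt hδ₁ hiso hη
  refine ⟨min δ₁ (min ρ (δ₂ / 2)), by positivity, fun x y s hs hs0 hclose => ?_⟩
  simp only [max_lt_iff, lt_min_iff, forall_and] at hclose
  obtain ⟨⟨-, hδ₁y⟩, ⟨hρx, -⟩, -, hδ₂y⟩ := hclose
  rcases hsync x s hs hs0 hρx with hfix | hsync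
  · have hxy : dist x y < δ₁ := by simpa only [hs0, map_zero_apply] using hδ₁y 0
    exact ⟨0, by rwa [abs_zero], by rw [map_zero_apply, hiso x y hfix hxy]⟩
  · refine hδ₂kin x y fun t => ?_
    have hshift : dist (ϕ (s t) y) (ϕ t y) < δ₂ / 2 := by
      rw [show s t = (s t - t) + t by ring, map_add]; exact hsmall _ (hsync t) _
    calc dist (ϕ t x) (ϕ t y) ≤ dist (ϕ t x) (ϕ (s t) y) + dist (ϕ (s t) y) (ϕ t y) :=
          dist_triangle _ _ _
      _ < δ₂ / 2 + δ₂ / 2 := add_lt_add (hδ₂y t) hshift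
      _ = δ₂ := add_halves δ₂

theorem isKHKinematicExpansive_iff [CompactSpace X] :
    ϕ.IsKHKinematicExpansive ↔ ϕ.IsKHExpansive ∧ ϕ.IsKinematicExpansive :=
  ⟨fun h => ⟨h.isKHExpansive, h.isKinematicExpansive⟩,
    fun h => h.1.isKHKinematicExpansive h.2⟩

end Expansive

end Flow

theorem stmt15 {X : Type*} [MetricSpace X] [CompactSpace X]
    (φ : ℝ → X → X)
    (hcont : Continuous fun p : ℝ × X => φ p.1 p.2)
    (h0 : ∀ x, φ 0 x = x)
    (hadd : ∀ t s x, φ (t + s) x = φ t (φ s x)) :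
    (∀ ε > (0:ℝ), ∃ δ > (0:ℝ), ∀ (x y : X) (s : ℝ → ℝ),
        Continuous s → s 0 = 0 →
        (∀ t, max (dist (φ t x) (φ (s t) x)) (dist (φ t x) (φ (s t) y)) < δ) →
        ∃ τ : ℝ, |τ| < ε ∧ y = φ τ x) ↔
      ((∃ δ > (0:ℝ), ∀ (x y : X) (s : ℝ → ℝ),
          Continuous s → s 0 = 0 →
          (∀ t, max (dist (φ t x) (φ (s t) x)) (dist (φ t x) (φ (s t) y)) < δ) →
          ∃ τ : ℝ, y = φ τ x) ∧
        (∀ ε > (0:ℝ), ∃ δ > (0:ℝ), ∀ x y : X,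
          (∀ t, dist (φ t x) (φ t y) < δ) → ∃ τ : ℝ, |τ| < ε ∧ y = φ τ x)) :=
  Flow.isKHKinematicExpansive_iff (ϕ := ⟨φ, hcont, hadd, h0⟩)
end

section
/- Let φ be a continuous flow on a compact metric space and suppose (x_n) is a sequence of points with φ_{t_n}(x_n) = x_n where t_n → 0⁺, and x_n → x₀. Then x₀ is a fixed point of φ. -/
/-!
Reducing `s` modulo the period `tₙ` gives `rₙ ∈ [0, tₙ)` with `φ s xₙ = φ rₙ xₙ`. Since `rₙ → 0`,
joint continuity of the flow makes this sequence converge both to `φ s x₀` and to `φ 0 x₀ = x₀`.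
-/

open Filter Topology

namespace Flow

variable {τ α : Type*} [TopologicalSpace τ] [AddGroup τ] [TopologicalSpace α]

theorem map_zsmul_eq_self_s18 (ϕ : Flow τ α) {t : τ} {x : α} (h : ϕ t x = x) (k : ℤ) :
    ϕ (k • t) x = x :=
  letI := ϕ.toAddAction
  (AddAction.stabilizer τ x).zsmul_mem h k

theorem map_toIcoMod_eq (ϕ : Flow ℝ α) {p : ℝ} (hp : 0 < p) {x : α} (h : ϕ p x = x) (s : ℝ) :
    ϕ (toIcoMod hp 0 s) x = ϕ s x := by
  conv_rhs => rw [← toIcoMod_add_toIcoDiv_zsmul hp 0 s, map_add, ϕ.map_zsmul_eq_self_s18 h]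

theorem map_eq_self_of_tendsto_periodic [T2Space α] (ϕ : Flow ℝ α) {ι : Type*} {l : Filter ι}
    [l.NeBot] {x : ι → α} {p : ι → ℝ} {x₀ : α} (hp_pos : ∀ i, 0 < p i)
    (hp : Tendsto p l (𝓝 0)) (hper : ∀ i, ϕ (p i) (x i) = x i) (hx : Tendsto x l (𝓝 x₀))
    (s : ℝ) : ϕ s x₀ = x₀ := by
  set r := fun i ↦ toIcoMod (hp_pos i) 0 s
  have hr : Tendsto r l (𝓝 0) :=
    squeeze_zero (fun i ↦ (toIcoMod_mem_Ico' (hp_pos i) s).1)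
      (fun i ↦ (toIcoMod_mem_Ico' (hp_pos i) s).2.le) hp
  have lim_s : Tendsto (fun i ↦ ϕ s (x i)) l (𝓝 (ϕ s x₀)) :=
    ((ϕ.continuous_toFun s).tendsto x₀).comp hx
  have lim_r : Tendsto (fun i ↦ ϕ (r i) (x i)) l (𝓝 (ϕ 0 x₀)) :=
    (ϕ.cont'.tendsto (0, x₀)).comp (hr.prodMk_nhds hx)
  rw [map_zero_apply] at lim_r
  refine tendsto_nhds_unique lim_s (lim_r.congr fun i ↦ ?_)
  exact ϕ.map_toIcoMod_eq (hp_pos i) (hper i) s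

end Flow

theorem stmt18_general {X : Type*} [MetricSpace X]
    (φ : ℝ → X → X)
    (hcont : Continuous fun p : ℝ × X => φ p.1 p.2)
    (h0 : ∀ x, φ 0 x = x)
    (hadd : ∀ t s x, φ (t + s) x = φ t (φ s x))
    (x : ℕ → X) (t : ℕ → ℝ) (x₀ : X)
    (ht_pos : ∀ n, 0 < t n)
    (ht_lim : Filter.Tendsto t Filter.atTop (nhds 0))
    (hper : ∀ n, φ (t n) (x n) = x n)
    (hx_lim : Filter.Tendsto x Filter.atTop (nhds x₀)) :
    ∀ s : ℝ, φ s x₀ = x₀ :=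
  (Flow.mk φ hcont hadd h0).map_eq_self_of_tendsto_periodic ht_pos ht_lim hper hx_lim

theorem stmt18 {X : Type*} [MetricSpace X] [CompactSpace X]
    (φ : ℝ → X → X)
    (hcont : Continuous fun p : ℝ × X => φ p.1 p.2)
    (h0 : ∀ x, φ 0 x = x)
    (hadd : ∀ t s x, φ (t + s) x = φ t (φ s x))
    (x : ℕ → X) (t : ℕ → ℝ) (x₀ : X)
    (ht_pos : ∀ n, 0 < t n)
    (ht_lim : Filter.Tendsto t Filter.atTop (nhds 0))
    (hper : ∀ n, φ (t n) (x n) = x n)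
    (hx_lim : Filter.Tendsto x Filter.atTop (nhds x₀)) :
    ∀ s : ℝ, φ s x₀ = x₀ :=
  stmt18_general φ hcont h0 hadd x t x₀ ht_pos ht_lim hper hx_lim
end
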